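/- For a > 0 and ξ > 0, set v₁ = 1/(4ξ²), v₂ = a², v₃ = √(v₁² + 2v₁v₂), V = v₁+v₂+v₃, and B = v₂/V. Then 0 < B < 1, and there exist constants C₁, C₂, C₃ > 0 depending only on ξ such that C₁·a ≤ (log(1/B))^{-1} ≤ C₂ + C₃·a for all a > 0. -/

import Mathlib

/-!
With `c = √(v₁ / 2)` the denominator `V` is the perfect square `(c + √(c² + a²))²`, and
`(c + √(c² + a²)) / a = exp (arsinh (c / a))`. Hence `B = exp (-2 arsinh (c / a))`, so
`log (1 / B) = 2 arsinh (c / a)`. The elementary bounds `2x / (x + 2) ≤ log (1 + x) ≤ arsinh x ≤ x`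
for `x ≥ 0` pin `(2 arsinh x)⁻¹` between `(2x)⁻¹` and `1/4 + (2x)⁻¹`, and `(2 (c / a))⁻¹` is
linear in `a`.
-/

open Real

namespace Real

lemma arsinh_le_self {x : ℝ} (hx : 0 ≤ x) : arsinh x ≤ x := by
  rw [← sinh_le_sinh, sinh_arsinh]
  exact self_le_sinh_iff.2 hx

lemma log_one_add_le_arsinh {x : ℝ} (hx : 0 ≤ x) : log (1 + x) ≤ arsinh x := by
  have h : 1 ≤ √(1 + x ^ 2) := one_le_sqrt.2 (by nlinarith)
  exact log_le_log (by linarith) (by linarith)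

lemma inv_two_mul_le_inv_two_mul_arsinh {x : ℝ} (hx : 0 < x) : (2 * x)⁻¹ ≤ (2 * arsinh x)⁻¹ := by
  have := arsinh_pos_iff.2 hx
  gcongr
  exact arsinh_le_self hx.le

lemma inv_two_mul_arsinh_le {x : ℝ} (hx : 0 < x) : (2 * arsinh x)⁻¹ ≤ 4⁻¹ + (2 * x)⁻¹ := by
  have h : 2 * x / (x + 2) ≤ arsinh x :=
    (le_log_one_add_of_nonneg hx.le).trans (log_one_add_le_arsinh hx.le)
  calc (2 * arsinh x)⁻¹ ≤ (2 * (2 * x / (x + 2)))⁻¹ := by gcongr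
    _ = 4⁻¹ + (2 * x)⁻¹ := by field_simp; ring

end Real

lemma sq_div_eq_exp_neg_two_mul_arsinh {v a : ℝ} (hv : 0 ≤ v) (ha : 0 < a) :
    a ^ 2 / (v + a ^ 2 + √(v ^ 2 + 2 * v * a ^ 2)) = exp (-(2 * arsinh (√(v / 2) / a))) := by
  set c := √(v / 2)
  have hc0 : 0 ≤ c := sqrt_nonneg _
  have hc2 : c ^ 2 = v / 2 := sq_sqrt (by positivity)
  have hs : √(1 + (c / a) ^ 2) = √(c ^ 2 + a ^ 2) / a := by
    rw [div_pow, ← sqrt_sq ha.le, ← sqrt_div' _ (sq_nonneg a), sqrt_sq ha.le]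
    congr 1; field_simp; ring
  have hcross : √(v ^ 2 + 2 * v * a ^ 2) = 2 * c * √(c ^ 2 + a ^ 2) := by
    rw [← sqrt_sq (by positivity : 0 ≤ 2 * c), ← sqrt_mul (by positivity)]
    congr 1; rw [mul_pow, hc2]; ring
  have hsq : v + a ^ 2 + √(v ^ 2 + 2 * v * a ^ 2) = (c + √(c ^ 2 + a ^ 2)) ^ 2 := by
    rw [hcross, add_sq, hc2, sq_sqrt (by positivity)]; ring
  rw [hsq, exp_neg, two_mul, exp_add, exp_arsinh, hs]
  field_simp

/-- For the eigenvalue decay rate `B = v₂/V` of the rescaled squared-exponential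
kernel under Gaussian design, `0 < B < 1` and `(log(1/B))⁻¹` grows linearly in
the rescaling level `a`: `C₁ a ≤ (log(1/B))⁻¹ ≤ C₂ + C₃ a`. -/
theorem log_inv_B_linear_growth (ξ : ℝ) (hξ : 0 < ξ) :
    ∃ C₁ C₂ C₃ : ℝ, 0 < C₁ ∧ 0 < C₂ ∧ 0 < C₃ ∧
      ∀ a : ℝ, 0 < a →
        let v₁ := 1 / (4 * ξ ^ 2)
        let v₂ := a ^ 2
        let v₃ := Real.sqrt (v₁ ^ 2 + 2 * v₁ * v₂)
        let V := v₁ + v₂ + v₃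
        let B := v₂ / V
        0 < B ∧ B < 1 ∧
          C₁ * a ≤ (Real.log (1 / B))⁻¹ ∧ (Real.log (1 / B))⁻¹ ≤ C₂ + C₃ * a := by
  set c := √(1 / (4 * ξ ^ 2) / 2)
  have hc : 0 < c := sqrt_pos.2 (by positivity)
  refine ⟨(2 * c)⁻¹, 4⁻¹, (2 * c)⁻¹, by positivity, by norm_num, by positivity, fun a ha => ?_⟩
  have hx : 0 < c / a := div_pos hc ha
  have hy : 0 < arsinh (c / a) := arsinh_pos_iff.2 hx
  have hscale : (2 * (c / a))⁻¹ = (2 * c)⁻¹ * a := by field_simp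
  intro v₁ v₂ v₃ V B
  have hB : B = exp (-(2 * arsinh (c / a))) := sq_div_eq_exp_neg_two_mul_arsinh (by positivity) ha
  rw [hB, one_div, ← exp_neg, neg_neg, log_exp, ← hscale]
  exact ⟨exp_pos _, exp_lt_one_iff.2 (by linarith), inv_two_mul_le_inv_two_mul_arsinh hx,
    inv_two_mul_arsinh_le hx⟩
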